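/- arXiv:2403.11013 — 4 statements merged into one kernel-verified Lean document; each statement's English description precedes it below -/
import Mathlib

section
/- Fix m ≥ 2 and points x_1,...,x_m ∈ ℝ^d. Let a = min_{i≠j} ‖x_i − x_j‖ and b = max_{i≠j} |‖x_i‖ − ‖x_j‖|. For any nonnegative weights w_1,...,w_m with ∑ w_i = 1, letting L = ∑_i w_i‖x_i‖ > 0, one has ‖∑_i w_i x_i‖ ≤ L − ((a² − b²)/(4L)) · ∑_i w_i(1 − w_i). -/
/-!
Expanding `‖∑ wᵢ xᵢ‖²` gives `L² - ∑ᵢ ∑ⱼ wᵢ wⱼ (‖xᵢ‖ ‖xⱼ‖ - xᵢ'xⱼ)`. The diagonal terms vanish, and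
the identity `2 xᵢ'xⱼ = 2 ‖xᵢ‖ ‖xⱼ‖ + (‖xᵢ‖ - ‖xⱼ‖)² - ‖xᵢ - xⱼ‖²` bounds every off-diagonal term
below by `(a² - b²) / 2`, so `‖∑ wᵢ xᵢ‖² ≤ L² - (a² - b²)/2 · ∑ wᵢ (1 - wᵢ)`. Since
`L + ‖∑ wᵢ xᵢ‖ ≤ 2L`, dividing `L² - ‖∑ wᵢ xᵢ‖²` by `L + ‖∑ wᵢ xᵢ‖` turns this into the linear bound.
-/

open scoped BigOperators

noncomputable def sval {d K : ℕ} (A : Matrix (Fin d) (Fin K) ℝ) (k : ℕ) : ℝ :=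
  ⨆ W : {W : Submodule ℝ (EuclideanSpace ℝ (Fin K)) // Module.finrank ℝ W = k},
    ⨅ x : {x : EuclideanSpace ℝ (Fin K) // x ∈ W.1 ∧ ‖x‖ = 1},
      ‖Matrix.toEuclideanLin A x.1‖

noncomputable def vnorm {d : ℕ} (x : Fin d → ℝ) : ℝ :=
  Real.sqrt (∑ i, x i ^ 2)

open scoped RealInnerProductSpace

lemma vnorm_eq_norm_toLp {d : ℕ} (x : Fin d → ℝ) : vnorm x = ‖WithLp.toLp 2 x‖ := by
  simp [vnorm, EuclideanSpace.norm_eq, sq_abs]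

section InnerProductSpace

variable {E : Type*} [NormedAddCommGroup E] [InnerProductSpace ℝ E]

lemma real_inner_le_norm_mul_norm_sub_of_separated {u v : E} {a b : ℝ} (ha : 0 ≤ a)
    (hsep : a ≤ ‖u - v‖) (hspread : |‖u‖ - ‖v‖| ≤ b) :
    ⟪u, v⟫ ≤ ‖u‖ * ‖v‖ - (a ^ 2 - b ^ 2) / 2 := by
  have hdist : a ^ 2 ≤ ‖u - v‖ ^ 2 := pow_le_pow_left₀ ha hsep 2
  have hdiff : (‖u‖ - ‖v‖) ^ 2 ≤ b ^ 2 := sq_le_sq' (abs_le.mp hspread).1 (abs_le.mp hspread).2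
  nlinarith [norm_sub_sq_real u v]

variable {ι : Type*} [Fintype ι]

lemma norm_sum_smul_le_sum_mul_norm {w : ι → ℝ} (hw : ∀ i, 0 ≤ w i) (y : ι → E) :
    ‖∑ i, w i • y i‖ ≤ ∑ i, w i * ‖y i‖ :=
  (norm_sum_le _ _).trans_eq <| Finset.sum_congr rfl fun i _ => by
    rw [norm_smul, Real.norm_of_nonneg (hw i)]

lemma norm_sum_smul_sq_le {w : ι → ℝ} (hw : ∀ i, 0 ≤ w i) {y : ι → E} {c : ℝ}
    (hc : ∀ i j, i ≠ j → ⟪y i, y j⟫ ≤ ‖y i‖ * ‖y j‖ - c) :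
    ‖∑ i, w i • y i‖ ^ 2 ≤ (∑ i, w i * ‖y i‖) ^ 2 - c * ∑ i, w i * (∑ j, w j - w i) := by
  classical
  have hexpand : ‖∑ i, w i • y i‖ ^ 2 = ∑ i, ∑ j, w i * w j * ⟪y i, y j⟫ := by
    rw [← real_inner_self_eq_norm_sq, sum_inner]
    simp only [inner_sum, real_inner_smul_left, real_inner_smul_right]
    exact Finset.sum_congr rfl fun i _ => Finset.sum_congr rfl fun j _ => by ring
  have hterm : ∀ i j, w i * w j * ⟪y i, y j⟫ ≤
      w i * w j * (‖y i‖ * ‖y j‖) - w i * w j * (if i = j then 0 else c) := by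
    intro i j
    rw [← mul_sub]
    refine mul_le_mul_of_nonneg_left ?_ (mul_nonneg (hw i) (hw j))
    split_ifs with hij
    · rw [hij, sub_zero, real_inner_self_eq_norm_mul_norm]
    · exact hc i j hij
  have hoffdiag : ∀ i, ∑ j, w i * w j * (if i = j then 0 else c) = c * (w i * (∑ j, w j - w i)) := by
    intro i
    have hsplit : ∀ j, w i * w j * (if i = j then 0 else c) =
        c * w i * w j - (if i = j then c * w i * w i else 0) := by
      intro j
      split_ifs with hij
      · subst hij
        ring
      · ring
    simp only [hsplit, Finset.sum_sub_distrib, Finset.sum_ite_eq, Finset.mem_univ, if_true,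
      ← Finset.mul_sum]
    ring
  calc ‖∑ i, w i • y i‖ ^ 2
      ≤ ∑ i, ∑ j, (w i * w j * (‖y i‖ * ‖y j‖) - w i * w j * (if i = j then 0 else c)) := by
        rw [hexpand]
        exact Finset.sum_le_sum fun i _ => Finset.sum_le_sum fun j _ => hterm i j
    _ = (∑ i, w i * ‖y i‖) ^ 2 - c * ∑ i, w i * (∑ j, w j - w i) := by
        rw [sq, Finset.sum_mul_sum, Finset.mul_sum, ← Finset.sum_sub_distrib]
        refine Finset.sum_congr rfl fun i _ => ?_
        rw [Finset.sum_sub_distrib, hoffdiag]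
        congr 1
        exact Finset.sum_congr rfl fun j _ => by ring

end InnerProductSpace

lemma le_sub_of_sq_le_sq_sub_two_mul_mul {s L δ : ℝ} (hL : 0 < L) (hs : s ≤ L)
    (h : s ^ 2 ≤ L ^ 2 - 2 * L * δ) : s ≤ L - δ := by
  nlinarith [mul_le_mul_of_nonneg_left (show L + s ≤ 2 * L by linarith) (sub_nonneg.mpr hs)]

theorem stmt_2_general (d m : ℕ) (x : Fin m → Fin d → ℝ)
    (a b : ℝ)
    (ha : a = ⨅ p : {p : Fin m × Fin m // p.1 ≠ p.2}, vnorm (x p.1.1 - x p.1.2))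
    (hb : b = ⨆ p : {p : Fin m × Fin m // p.1 ≠ p.2}, |vnorm (x p.1.1) - vnorm (x p.1.2)|)
    (w : Fin m → ℝ) (hw : ∀ i, 0 ≤ w i) (hwsum : ∑ i, w i = 1)
    (L : ℝ) (hL : L = ∑ i, w i * vnorm (x i)) (hLpos : 0 < L) :
    vnorm (∑ i, w i • x i) ≤ L - ((a ^ 2 - b ^ 2) / (4 * L)) * ∑ i, w i * (1 - w i) := by
  set y : Fin m → EuclideanSpace ℝ (Fin d) := fun i => WithLp.toLp 2 (x i)
  have ha0 : 0 ≤ a := by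
    rw [ha]
    exact Real.iInf_nonneg fun _ => (vnorm_eq_norm_toLp _).symm ▸ norm_nonneg _
  have hsep : ∀ i j, i ≠ j → a ≤ ‖y i - y j‖ := fun i j hij => by
    rw [ha]
    refine (ciInf_le (Finite.bddBelow_range _) ⟨(i, j), hij⟩).trans_eq ?_
    simp only [y, vnorm_eq_norm_toLp, WithLp.toLp_sub]
  have hspread : ∀ i j, i ≠ j → |‖y i‖ - ‖y j‖| ≤ b := fun i j hij => by
    rw [hb]
    refine (le_ciSup (Finite.bddAbove_range _) ⟨(i, j), hij⟩).trans_eq' ?_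
    simp only [y, vnorm_eq_norm_toLp]
  have hLy : L = ∑ i, w i * ‖y i‖ := by simp only [hL, y, vnorm_eq_norm_toLp]
  have hS : vnorm (∑ i, w i • x i) = ‖∑ i, w i • y i‖ := by simp [y, vnorm_eq_norm_toLp]
  rw [hS]
  refine le_sub_of_sq_le_sq_sub_two_mul_mul hLpos (hLy ▸ norm_sum_smul_le_sum_mul_norm hw y) ?_
  calc ‖∑ i, w i • y i‖ ^ 2
      ≤ L ^ 2 - (a ^ 2 - b ^ 2) / 2 * ∑ i, w i * (∑ j, w j - w i) :=
        hLy ▸ norm_sum_smul_sq_le hw fun i j hij =>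
          real_inner_le_norm_mul_norm_sub_of_separated ha0 (hsep i j hij) (hspread i j hij)
    _ = L ^ 2 - 2 * L * ((a ^ 2 - b ^ 2) / (4 * L) * ∑ i, w i * (1 - w i)) := by
        rw [hwsum]
        field_simp
        ring

/-- norm deficit of a convex combination. -/
theorem stmt_2 (d m : ℕ) (hm : 2 ≤ m) (x : Fin m → Fin d → ℝ)
    (a b : ℝ)
    (ha : a = ⨅ p : {p : Fin m × Fin m // p.1 ≠ p.2}, vnorm (x p.1.1 - x p.1.2))
    (hb : b = ⨆ p : {p : Fin m × Fin m // p.1 ≠ p.2}, |vnorm (x p.1.1) - vnorm (x p.1.2)|)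
    (w : Fin m → ℝ) (hw : ∀ i, 0 ≤ w i) (hwsum : ∑ i, w i = 1)
    (L : ℝ) (hL : L = ∑ i, w i * vnorm (x i)) (hLpos : 0 < L) :
    vnorm (∑ i, w i • x i) ≤ L - ((a ^ 2 - b ^ 2) / (4 * L)) * ∑ i, w i * (1 - w i) :=
  stmt_2_general d m x a b ha hb w hw hwsum L hL hLpos
end

section
/- Fix 1 ≤ s ≤ K−2 and v_1,...,v_K ∈ ℝ^d with V = [v_1,...,v_K]. Suppose at least s of the vertices satisfy ‖v_k‖ ≤ δ, and s²_{K−1−s}(V) ≥ 2(K−2)δ². Then max_k ‖v_k‖ ≥ √((K−s−1)/(2(K−s)))·s_{K−1−s}(V) ≥ (1/2)·s_{K−1−s}(V). -/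
open scoped BigOperators

lemma vnorm_nonneg {d : ℕ} (x : Fin d → ℝ) : 0 ≤ vnorm x := Real.sqrt_nonneg _

lemma vnorm_sq {d : ℕ} (x : Fin d → ℝ) : vnorm x ^ 2 = ∑ i, x i ^ 2 :=
  Real.sq_sqrt (Finset.sum_nonneg fun _ _ => sq_nonneg _)

lemma sval_nonneg {d K : ℕ} (A : Matrix (Fin d) (Fin K) ℝ) (k : ℕ) : 0 ≤ sval A k :=
  Real.iSup_nonneg fun _ => Real.iInf_nonneg fun _ => norm_nonneg _

lemma sval_zero {d K : ℕ} (A : Matrix (Fin d) (Fin K) ℝ) : sval A 0 = 0 := by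
  refine le_antisymm (Real.iSup_le (fun W => ?_) le_rfl) (sval_nonneg A 0)
  have hW : W.1 = ⊥ := Submodule.finrank_eq_zero.mp W.2
  have : IsEmpty {x : EuclideanSpace ℝ (Fin K) // x ∈ W.1 ∧ ‖x‖ = 1} :=
    ⟨fun ⟨x, hx, hx1⟩ => by simp_all⟩
  rw [Real.iInf_of_isEmpty]

lemma norm_toEuclideanLin_sq {d K : ℕ} (A : Matrix (Fin d) (Fin K) ℝ)
    (x : EuclideanSpace ℝ (Fin K)) :
    ‖Matrix.toEuclideanLin A x‖ ^ 2 =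
      ∑ r, ‖inner ℝ x (WithLp.toLp 2 (A r) : EuclideanSpace ℝ (Fin K))‖ ^ 2 := by
  rw [EuclideanSpace.norm_sq_eq]
  refine Finset.sum_congr rfl fun r _ => ?_
  simp [EuclideanSpace.inner_eq_star_dotProduct, Matrix.mulVec, dotProduct_comm]

/-- Bessel's inequality applied to the rows of `A`. -/
lemma sum_norm_toEuclideanLin_sq_le {d K : ℕ} {ι : Type*} [Fintype ι]
    (A : Matrix (Fin d) (Fin K) ℝ) {e : ι → EuclideanSpace ℝ (Fin K)} (he : Orthonormal ℝ e) :
    ∑ j, ‖Matrix.toEuclideanLin A (e j)‖ ^ 2 ≤ ∑ r, ∑ k, A r k ^ 2 := by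
  simp_rw [norm_toEuclideanLin_sq]
  rw [Finset.sum_comm]
  refine Finset.sum_le_sum fun r _ => ?_
  calc ∑ j, ‖inner ℝ (e j) (WithLp.toLp 2 (A r) : EuclideanSpace ℝ (Fin K))‖ ^ 2
      ≤ ‖(WithLp.toLp 2 (A r) : EuclideanSpace ℝ (Fin K))‖ ^ 2 := he.sum_inner_products_le _
    _ = ∑ k, A r k ^ 2 := by simp [EuclideanSpace.norm_sq_eq]

lemma natCast_mul_sq_iInf_le {d K m : ℕ} (A : Matrix (Fin d) (Fin K) ℝ)
    (W : Submodule ℝ (EuclideanSpace ℝ (Fin K))) (hW : Module.finrank ℝ W = m) :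
    (m : ℝ) * (⨅ x : {x : EuclideanSpace ℝ (Fin K) // x ∈ W ∧ ‖x‖ = 1},
      ‖Matrix.toEuclideanLin A x.1‖) ^ 2 ≤ ∑ r, ∑ k, A r k ^ 2 := by
  set c := ⨅ x : {x : EuclideanSpace ℝ (Fin K) // x ∈ W ∧ ‖x‖ = 1},
    ‖Matrix.toEuclideanLin A x.1‖
  have hc : 0 ≤ c := Real.iInf_nonneg fun _ => norm_nonneg _
  let b : OrthonormalBasis (Fin m) ℝ W := (stdOrthonormalBasis ℝ W).reindex (finCongr hW)
  have he : Orthonormal ℝ fun j => (b j : EuclideanSpace ℝ (Fin K)) :=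
    b.orthonormal.comp_linearIsometry W.subtypeₗᵢ
  have hce (j : Fin m) : c ≤ ‖Matrix.toEuclideanLin A (b j)‖ :=
    ciInf_le (f := fun x : {x : EuclideanSpace ℝ (Fin K) // x ∈ W ∧ ‖x‖ = 1} =>
        ‖Matrix.toEuclideanLin A x.1‖) ⟨0, Set.forall_mem_range.2 fun _ => norm_nonneg _⟩
      ⟨b j, (b j).2, he.1 j⟩
  calc (m : ℝ) * c ^ 2 = ∑ _j : Fin m, c ^ 2 := by simp
    _ ≤ ∑ j, ‖Matrix.toEuclideanLin A (b j)‖ ^ 2 :=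
      Finset.sum_le_sum fun j _ => pow_le_pow_left₀ hc (hce j) 2
    _ ≤ ∑ r, ∑ k, A r k ^ 2 := sum_norm_toEuclideanLin_sq_le A he

lemma natCast_mul_sval_sq_le {d K : ℕ} (A : Matrix (Fin d) (Fin K) ℝ) (m : ℕ) :
    (m : ℝ) * sval A m ^ 2 ≤ ∑ r, ∑ k, A r k ^ 2 := by
  rcases Nat.eq_zero_or_pos m with rfl | hm
  · simpa using Finset.sum_nonneg fun r _ => Finset.sum_nonneg fun k _ => sq_nonneg (A r k)
  have hm' : (0 : ℝ) < m := by exact_mod_cast hm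
  have hF : 0 ≤ (∑ r, ∑ k, A r k ^ 2) / m := by positivity
  have hsval : sval A m ≤ √((∑ r, ∑ k, A r k ^ 2) / m) := by
    refine Real.iSup_le (fun W => ?_) (Real.sqrt_nonneg _)
    rw [Real.le_sqrt (Real.iInf_nonneg fun _ => norm_nonneg _) hF, le_div_iff₀' hm']
    exact natCast_mul_sq_iInf_le A W.1 W.2
  rw [← le_div_iff₀' hm', ← Real.sq_sqrt hF]
  exact pow_le_pow_left₀ (sval_nonneg A m) hsval 2

lemma sum_le_card_mul_add_card_compl_mul {ι : Type*} [Fintype ι] [DecidableEq ι] (S : Finset ι)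
    {f : ι → ℝ} {a b : ℝ} (ha : ∀ i ∈ S, f i ≤ a) (hb : ∀ i ∉ S, f i ≤ b) :
    ∑ i, f i ≤ S.card * a + Sᶜ.card * b := by
  rw [← Finset.sum_add_sum_compl S f]
  gcongr
  · simpa using Finset.sum_le_card_nsmul S f a ha
  · simpa using Finset.sum_le_card_nsmul Sᶜ f b fun i hi => hb i (Finset.mem_compl.1 hi)

lemma sum_sq_le_of_vnorm_col_le {d K : ℕ} (V : Matrix (Fin d) (Fin K) ℝ) {T : Finset (Fin K)}
    {δ M : ℝ} (hT : ∀ k ∈ T, vnorm (fun i => V i k) ≤ δ) (hM : ∀ k, vnorm (fun i => V i k) ≤ M) :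
    ∑ r, ∑ k, V r k ^ 2 ≤ T.card * δ ^ 2 + (K - T.card) * M ^ 2 := by
  rw [Finset.sum_comm]
  simp only [← vnorm_sq (fun i => V i _)]
  have := sum_le_card_mul_add_card_compl_mul T
    (fun k hk => pow_le_pow_left₀ (vnorm_nonneg _) (hT k hk) 2)
    (fun k _ => pow_le_pow_left₀ (vnorm_nonneg _) (hM k) 2)
  rwa [Finset.card_compl, Fintype.card_fin, Nat.cast_sub (by simpa using T.card_le_univ)] at this

lemma sqrt_div_mul_le_of_gap {K s δ σ M : ℝ} (hs : 0 ≤ s) (hsK : s + 2 ≤ K) (hσ : 0 ≤ σ)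
    (hM : 0 ≤ M) (hgap : 2 * (K - 2) * δ ^ 2 ≤ σ ^ 2)
    (h : (K - s - 1) * σ ^ 2 ≤ s * δ ^ 2 + (K - s) * M ^ 2) :
    √((K - s - 1) / (2 * (K - s))) * σ ≤ M := by
  -- `(K - s - 1) σ² - 2 s δ² = (K - s - 1)(σ² - 2 (K - 2) δ²) + 2 δ² ((K - s - 1)(K - 2) - s)`
  have hδ : 2 * s * δ ^ 2 ≤ (K - s - 1) * σ ^ 2 := by
    nlinarith [mul_nonneg (by linarith : 0 ≤ K - s - 1) (sub_nonneg.2 hgap),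
      mul_nonneg (sq_nonneg δ) (mul_nonneg (by linarith : 0 ≤ K - s - 2) (by linarith : 0 ≤ K - 2)),
      mul_nonneg (sq_nonneg δ) (by linarith : 0 ≤ K - 2 - s)]
  have hc : 0 ≤ (K - s - 1) / (2 * (K - s)) := div_nonneg (by linarith) (by linarith)
  have hsq : (K - s - 1) / (2 * (K - s)) * σ ^ 2 ≤ M ^ 2 := by
    rw [div_mul_eq_mul_div, div_le_iff₀ (by linarith)]
    linarith
  refine (pow_le_pow_iff_left₀ (by positivity) hM two_ne_zero).1 ?_
  rwa [mul_pow, Real.sq_sqrt hc]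

lemma one_half_le_sqrt_div {K s : ℝ} (hsK : s + 2 ≤ K) : 1 / 2 ≤ √((K - s - 1) / (2 * (K - s))) := by
  rw [Real.le_sqrt (by norm_num) (div_nonneg (by linarith) (by linarith)), le_div_iff₀ (by linarith)]
  linarith

theorem stmt_9_general (d K s : ℕ)
    (V : Matrix (Fin d) (Fin K) ℝ) (δ : ℝ)
    (S : Finset (Fin K)) (hcard : s ≤ S.card)
    (hsmall : ∀ k ∈ S, vnorm (fun i => V i k) ≤ δ)
    (hgap : 2 * ((K : ℝ) - 2) * δ ^ 2 ≤ sval V (K - 1 - s) ^ 2) :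
    Real.sqrt (((K : ℝ) - s - 1) / (2 * ((K : ℝ) - s))) * sval V (K - 1 - s) ≤
        (⨆ k : Fin K, vnorm (fun i => V i k)) ∧
      (1 / 2) * sval V (K - 1 - s) ≤
        Real.sqrt (((K : ℝ) - s - 1) / (2 * ((K : ℝ) - s))) * sval V (K - 1 - s) := by
  set M := ⨆ k : Fin K, vnorm (fun i => V i k)
  have hM : 0 ≤ M := Real.iSup_nonneg fun k => vnorm_nonneg _
  have hle_M (k : Fin K) : vnorm (fun i => V i k) ≤ M :=
    le_ciSup (f := fun k => vnorm (fun i => V i k)) (Set.finite_range _).bddAbove k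
  rcases lt_or_ge K (s + 2) with hK | hK
  · -- here the natural-number index `K - 1 - s` truncates to `0`
    rw [show K - 1 - s = 0 by omega, sval_zero]
    simpa using hM
  have hKR : (s : ℝ) + 2 ≤ K := by exact_mod_cast hK
  have hcast : ((K - 1 - s : ℕ) : ℝ) = K - s - 1 := by
    rw [Nat.sub_sub, Nat.cast_sub (by omega)]; push_cast; ring
  obtain ⟨T, hTS, hT⟩ := Finset.exists_subset_card_eq hcard
  have hcols := sum_sq_le_of_vnorm_col_le V (fun k hk => hsmall k (hTS hk)) hle_M
  rw [hT] at hcols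
  have hfrob := natCast_mul_sval_sq_le V (K - 1 - s)
  rw [hcast] at hfrob
  exact ⟨sqrt_div_mul_le_of_gap s.cast_nonneg hKR (sval_nonneg V _) hM hgap (hfrob.trans hcols),
    mul_le_mul_of_nonneg_right (one_half_le_sqrt_div hKR) (sval_nonneg V _)⟩

/-- lower bound on max_k ‖v_k‖ when s vertices are small. -/
theorem stmt_9 (d K s : ℕ) (hs1 : 1 ≤ s) (hs2 : s ≤ K - 2)
    (V : Matrix (Fin d) (Fin K) ℝ) (δ : ℝ) (hδ : 0 ≤ δ)
    (S : Finset (Fin K)) (hcard : s ≤ S.card)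
    (hsmall : ∀ k ∈ S, vnorm (fun i => V i k) ≤ δ)
    (hgap : 2 * ((K : ℝ) - 2) * δ ^ 2 ≤ sval V (K - 1 - s) ^ 2) :
    Real.sqrt (((K : ℝ) - s - 1) / (2 * ((K : ℝ) - s))) * sval V (K - 1 - s) ≤
        (⨆ k : Fin K, vnorm (fun i => V i k)) ∧
      (1 / 2) * sval V (K - 1 - s) ≤
        Real.sqrt (((K : ℝ) - s - 1) / (2 * ((K : ℝ) - s))) * sval V (K - 1 - s) :=
  stmt_9_general d K s V δ S hcard hsmall hgap
end

section
/- With V, G, Ṽ = V − v̄1_K' (v̄ the mean of columns of V) as above, and G positive semidefinite with G1_K = 0, one has λ_{K−1}(G)·ṼṼ' ⪯ VGV' ⪯ λ_1(G)·ṼṼ' in the positive semidefinite (Loewner) order. -/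
/-!
Since `G` annihilates `1`, so does `1ᵀ G`, hence `V G Vᵀ = Ṽ G Ṽᵀ`, and for every `x` the vector
`y = Ṽᵀ x` has coordinate sum zero. Both inequalities therefore reduce to bounds on the quadratic
form `yᵀ G y` over `y ⟂ 1`, where `sval G k` is the max–min (Courant–Fischer) singular value.
The upper bound is Cauchy–Schwarz together with `‖G y‖ ≤ sval G 1 ‖y‖`. For the lower bound,
`G` preserves `1ᗮ`; let `μ ≥ 0` be its least Rayleigh quotient there, attained at a unit
eigenvector `z`. Every `(K - 1)`-dimensional subspace meets `span {1, z}`, on which `‖G x‖ ≤ μ ‖x‖`,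
so `sval G (K - 1) ≤ μ ≤ yᵀ G y / ‖y‖²`.
-/

open scoped BigOperators
open Matrix

open Module
open scoped InnerProductSpace

section Rayleigh

variable {F : Type*} [NormedAddCommGroup F] [InnerProductSpace ℝ F] [FiniteDimensional ℝ F]

theorem LinearMap.IsSymmetric.exists_eigenvector_forall_mul_norm_sq_le [Nontrivial F]
    {T : F →ₗ[ℝ] F} (hT : T.IsSymmetric) :
    ∃ z : F, ∃ μ : ℝ, ‖z‖ = 1 ∧ T z = μ • z ∧ ∀ w, μ * ‖w‖ ^ 2 ≤ ⟪T w, w⟫_ℝ := by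
  let T' := hT.toSelfAdjoint
  have hT'w : ∀ w, T'.1.reApplyInnerSelf w = ⟪T w, w⟫_ℝ := fun _ => rfl
  obtain ⟨z, hz, hmin⟩ := (isCompact_sphere (0 : F) 1).exists_isMinOn
    (NormedSpace.sphere_nonempty.mpr zero_le_one) T'.1.reApplyInnerSelf_continuous.continuousOn
  have hz1 : ‖z‖ = 1 := by simpa using hz
  have hmin' : IsMinOn T'.1.reApplyInnerSelf (Metric.sphere 0 ‖z‖) z := hz1 ▸ hmin
  refine ⟨z, _, hz1, T'.2.eq_smul_self_of_isLocalExtrOn (Or.inl hmin'.localize), fun w => ?_⟩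
  rcases eq_or_ne w 0 with rfl | hw
  · simp
  have hw' : ‖w‖⁻¹ • w ∈ Metric.sphere (0 : F) 1 := by simp [norm_smul, hw]
  have key := hmin hw'
  simp only [Set.mem_ofPred_eq, hT'w, map_smul, real_inner_smul_left, real_inner_smul_right] at key
  simp only [ContinuousLinearMap.rayleighQuotient, hT'w, hz1]
  have : 0 < ‖w‖ := norm_pos_iff.mpr hw
  field_simp at key ⊢
  simpa [mul_comm] using key

theorem LinearMap.IsSymmetric.exists_eigenvector_mem_forall_mul_norm_sq_le
    {T : F →ₗ[ℝ] F} (hT : T.IsSymmetric) {P : Submodule ℝ F} (hP : ∀ v ∈ P, T v ∈ P)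
    [Nontrivial P] :
    ∃ z ∈ P, ∃ μ : ℝ, ‖z‖ = 1 ∧ T z = μ • z ∧ ∀ w ∈ P, μ * ‖w‖ ^ 2 ≤ ⟪T w, w⟫_ℝ := by
  obtain ⟨z, μ, hz, hTz, hμ⟩ := (hT.restrict_invariant hP).exists_eigenvector_forall_mul_norm_sq_le
  exact ⟨z, z.2, μ, hz, congrArg Subtype.val hTz, fun w hw => hμ ⟨w, hw⟩⟩

theorem exists_ne_zero_mem_norm_apply_le_mul_norm {T : F →ₗ[ℝ] F} {u z : F} {μ : ℝ}
    (hu : u ≠ 0) (hTu : T u = 0) (hz : ‖z‖ = 1) (hTz : T z = μ • z) (huz : ⟪u, z⟫_ℝ = 0)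
    (hμ : 0 ≤ μ) {W : Submodule ℝ F} (hW : finrank ℝ F < finrank ℝ W + 2) :
    ∃ x ∈ W, x ≠ 0 ∧ ‖T x‖ ≤ μ * ‖x‖ := by
  set S := Submodule.span ℝ (Set.range ![u, z])
  have hS : finrank ℝ S = 2 := by
    have hz0 : z ≠ 0 := norm_ne_zero_iff.mp (by simp [hz])
    have hind : LinearIndependent ℝ ![u, z] := by
      refine linearIndependent_of_ne_zero_of_inner_eq_zero (fun i => ?_) fun i j hij => ?_
      · fin_cases i <;> simpa
      · fin_cases i <;> fin_cases j <;> simp_all [real_inner_comm u z]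
    simpa using finrank_span_eq_card hind
  have : Nontrivial ↥(W ⊓ S) := by
    have := Submodule.finrank_sup_add_finrank_inf_eq W S
    have := Submodule.finrank_le (W ⊔ S)
    have hpos : 0 < finrank ℝ ↥(W ⊓ S) := by omega
    exact Module.finrank_pos_iff.mp hpos
  obtain ⟨⟨x, hxW, hxS⟩, hx0⟩ := exists_ne (0 : ↥(W ⊓ S))
  refine ⟨x, hxW, fun h => hx0 (Subtype.ext h), ?_⟩
  obtain ⟨c, rfl⟩ := (Submodule.mem_span_range_iff_exists_fun ℝ).mp hxS
  simp only [Fin.sum_univ_two, Matrix.cons_val_zero, Matrix.cons_val_one] at hx0 ⊢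
  have hc : c 1 = ⟪c 0 • u + c 1 • z, z⟫_ℝ := by
    simp [inner_add_left, real_inner_smul_left, huz, hz]
  calc ‖T (c 0 • u + c 1 • z)‖ = μ * |c 1| := by
        rw [map_add, map_smul, map_smul, hTu, hTz, smul_zero, zero_add, smul_smul, norm_smul,
          hz, mul_one, Real.norm_eq_abs, abs_mul, abs_of_nonneg hμ, mul_comm]
    _ ≤ μ * ‖c 0 • u + c 1 • z‖ := by
        gcongr
        simpa only [← hc, hz, mul_one] using abs_real_inner_le_norm (c 0 • u + c 1 • z) z

end Rayleigh

section SingularValues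

variable {d K : ℕ}

/-- The hypothesis `0 ≤ c` covers `k > K`, where the supremum defining `sval A k` is empty and
hence `0`. -/
theorem sval_le_of_forall {A : Matrix (Fin d) (Fin K) ℝ} {k : ℕ} {c : ℝ} (hc : 0 ≤ c)
    (h : ∀ W : Submodule ℝ (EuclideanSpace ℝ (Fin K)), finrank ℝ W = k →
      ∃ x ∈ W, x ≠ 0 ∧ ‖toEuclideanLin A x‖ ≤ c * ‖x‖) :
    sval A k ≤ c := by
  refine Real.iSup_le (fun W => ?_) hc
  obtain ⟨x, hxW, hx0, hx⟩ := h W.1 W.2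
  have hx' : 0 < ‖x‖ := norm_pos_iff.mpr hx0
  refine ciInf_le_of_le ⟨0, ?_⟩ ⟨‖x‖⁻¹ • x, W.1.smul_mem _ hxW, by simp [norm_smul, hx0]⟩ ?_
  · rintro _ ⟨_, rfl⟩
    exact norm_nonneg _
  · rw [map_smul, norm_smul, norm_inv, norm_norm, inv_mul_le_iff₀ hx', mul_comm]
    exact hx

theorem norm_toEuclideanLin_le_sval_one (A : Matrix (Fin d) (Fin K) ℝ)
    (x : EuclideanSpace ℝ (Fin K)) : ‖toEuclideanLin A x‖ ≤ sval A 1 * ‖x‖ := by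
  rcases eq_or_ne x 0 with rfl | hx0
  · simp
  have hx' : 0 < ‖x‖ := norm_pos_iff.mpr hx0
  have hbdd : BddAbove (Set.range fun W : {W : Submodule ℝ (EuclideanSpace ℝ (Fin K)) //
      finrank ℝ W = 1} => ⨅ y : {y : EuclideanSpace ℝ (Fin K) // y ∈ W.1 ∧ ‖y‖ = 1},
        ‖toEuclideanLin A y.1‖) := by
    refine ⟨‖LinearMap.toContinuousLinearMap (toEuclideanLin A)‖, ?_⟩
    rintro _ ⟨W, rfl⟩
    rcases isEmpty_or_nonempty {y // y ∈ W.1 ∧ ‖y‖ = 1} with hW | ⟨y, hyW, hy⟩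
    · simp only [Real.iInf_of_isEmpty]
      exact norm_nonneg _
    refine ciInf_le_of_le ⟨0, ?_⟩ ⟨y, hyW, hy⟩ ?_
    · rintro _ ⟨_, rfl⟩
      exact norm_nonneg _
    · simpa [hy] using (LinearMap.toContinuousLinearMap (toEuclideanLin A)).le_opNorm y
  have hspan : ‖toEuclideanLin A x‖ / ‖x‖ ≤ ⨅ y : {y : EuclideanSpace ℝ (Fin K) //
      y ∈ (ℝ ∙ x) ∧ ‖y‖ = 1}, ‖toEuclideanLin A y.1‖ := by
    have : Nonempty {y : EuclideanSpace ℝ (Fin K) // y ∈ (ℝ ∙ x) ∧ ‖y‖ = 1} :=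
      ⟨⟨‖x‖⁻¹ • x, Submodule.smul_mem _ _ (Submodule.mem_span_singleton_self x),
        by simp [norm_smul, hx0]⟩⟩
    refine le_ciInf fun ⟨y, hy, hy1⟩ => ?_
    obtain ⟨a, rfl⟩ := Submodule.mem_span_singleton.mp hy
    rw [norm_smul, Real.norm_eq_abs] at hy1
    rw [map_smul, norm_smul, Real.norm_eq_abs, div_le_iff₀ hx', mul_assoc, mul_comm _ ‖x‖,
      ← mul_assoc, hy1, one_mul]
  calc ‖toEuclideanLin A x‖ = ‖toEuclideanLin A x‖ / ‖x‖ * ‖x‖ := by field_simp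
    _ ≤ sval A 1 * ‖x‖ := by
      gcongr
      exact hspan.trans (le_ciSup hbdd ⟨ℝ ∙ x, finrank_span_singleton hx0⟩)

end SingularValues

section QuadraticForm

theorem inner_toEuclideanLin_toLp {ι : Type*} [Fintype ι] [DecidableEq ι]
    (A : Matrix ι ι ℝ) (y : ι → ℝ) :
    ⟪toEuclideanLin A (WithLp.toLp 2 y), WithLp.toLp 2 y⟫_ℝ = y ⬝ᵥ (A *ᵥ y) := by
  rw [real_inner_comm]
  exact (EuclideanSpace.inner_toLp_toLp y (A *ᵥ y)).trans (by rw [star_trivial, dotProduct_comm])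

theorem norm_toLp_sq {ι : Type*} [Fintype ι] (y : ι → ℝ) :
    ‖(WithLp.toLp 2 y : EuclideanSpace ℝ ι)‖ ^ 2 = y ⬝ᵥ y := by
  rw [← real_inner_self_eq_norm_sq]
  exact EuclideanSpace.inner_toLp_toLp y y

variable {K : ℕ}

theorem dotProduct_mulVec_le_sval_one_mul (A : Matrix (Fin K) (Fin K) ℝ) (y : Fin K → ℝ) :
    y ⬝ᵥ (A *ᵥ y) ≤ sval A 1 * (y ⬝ᵥ y) := by
  set yE : EuclideanSpace ℝ (Fin K) := WithLp.toLp 2 y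
  rw [← inner_toEuclideanLin_toLp, ← norm_toLp_sq]
  calc ⟪toEuclideanLin A yE, yE⟫_ℝ ≤ ‖toEuclideanLin A yE‖ * ‖yE‖ := real_inner_le_norm _ _
    _ ≤ sval A 1 * ‖yE‖ * ‖yE‖ := by
        gcongr
        exact norm_toEuclideanLin_le_sval_one A yE
    _ = sval A 1 * ‖yE‖ ^ 2 := by ring

theorem sval_sub_one_mul_le_dotProduct_mulVec (hK : 2 ≤ K) {G : Matrix (Fin K) (Fin K) ℝ}
    (hG : G.PosSemidef) (hG1 : G *ᵥ 1 = 0) {y : Fin K → ℝ} (hy : ∑ k, y k = 0) :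
    sval G (K - 1) * (y ⬝ᵥ y) ≤ y ⬝ᵥ (G *ᵥ y) := by
  set u : EuclideanSpace ℝ (Fin K) := WithLp.toLp 2 1
  have hpos : (toEuclideanLin G).IsPositive := isPositive_toEuclideanLin_iff.mpr hG
  have hTu : toEuclideanLin G u = 0 := congrArg (WithLp.toLp 2) hG1
  have : NeZero K := ⟨by omega⟩
  have hu : u ≠ 0 := (WithLp.toLp_eq_zero 2).not.mpr one_ne_zero
  have hP : ∀ v ∈ (ℝ ∙ u)ᗮ, toEuclideanLin G v ∈ (ℝ ∙ u)ᗮ := fun v hv => by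
    rw [Submodule.mem_orthogonal_singleton_iff_inner_right] at hv ⊢
    rw [← hpos.isSymmetric, hTu, inner_zero_left]
  have : Fact (finrank ℝ (EuclideanSpace ℝ (Fin K)) = (K - 1) + 1) := ⟨by simp; omega⟩
  have : Nontrivial (ℝ ∙ u)ᗮ := Module.finrank_pos_iff.mp (by
    rw [Submodule.finrank_orthogonal_span_singleton (n := K - 1) hu]; omega)
  obtain ⟨z, hzP, μ, hz, hTz, hμ⟩ :=
    hpos.isSymmetric.exists_eigenvector_mem_forall_mul_norm_sq_le hP
  have hμ0 : 0 ≤ μ := by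
    have := hpos.inner_nonneg_left z
    rwa [hTz, real_inner_smul_left, real_inner_self_eq_norm_sq, hz, one_pow, mul_one] at this
  have hsval : sval G (K - 1) ≤ μ := sval_le_of_forall hμ0 fun W hW =>
    exists_ne_zero_mem_norm_apply_le_mul_norm hu hTu hz hTz
      (Submodule.mem_orthogonal_singleton_iff_inner_right.mp hzP) hμ0
      (by rw [hW, finrank_euclideanSpace_fin]; omega)
  have hyP : WithLp.toLp 2 y ∈ (ℝ ∙ u)ᗮ := by
    rw [Submodule.mem_orthogonal_singleton_iff_inner_right, EuclideanSpace.inner_toLp_toLp]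
    simpa [dotProduct_one] using hy
  calc sval G (K - 1) * (y ⬝ᵥ y) ≤ μ * (y ⬝ᵥ y) := by
        gcongr
        exact dotProduct_self_star_nonneg y
    _ ≤ y ⬝ᵥ (G *ᵥ y) := by
        simpa only [norm_toLp_sq, inner_toEuclideanLin_toLp] using hμ _ hyP

end QuadraticForm

section Loewner

variable {m n : Type*} [Fintype n]

theorem add_vecMulVec_mul_mul_transpose {R : Type*} [CommSemiring R] (V : Matrix m n R)
    (c : m → R) {u : n → R} {G : Matrix n n R} (hGu : G *ᵥ u = 0) (huG : u ᵥ* G = 0) :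
    (V + vecMulVec c u) * G * (V + vecMulVec c u)ᵀ = V * G * Vᵀ := by
  have hVG : (V + vecMulVec c u) * G = V * G := by
    rw [Matrix.add_mul, vecMulVec_mul, huG]
    ext
    simp [vecMulVec_apply]
  have hGV : G * (V + vecMulVec c u)ᵀ = G * Vᵀ := by
    rw [transpose_add, transpose_vecMulVec, Matrix.mul_add, mul_vecMulVec, hGu]
    simp
  rw [hVG, Matrix.mul_assoc, hGV, Matrix.mul_assoc]

theorem mulVec_one_eq_zero_of_sub_mean {d K : ℕ} (hK : K ≠ 0) {V Vt : Matrix (Fin d) (Fin K) ℝ}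
    (hVt : ∀ i k, Vt i k = V i k - (1 / (K : ℝ)) * ∑ k, V i k) : Vt *ᵥ 1 = 0 := by
  ext i
  simp only [mulVec, dotProduct, Pi.one_apply, mul_one, hVt, Finset.sum_sub_distrib,
    Finset.sum_const, Finset.card_univ, Fintype.card_fin, nsmul_eq_mul, Pi.zero_apply]
  field_simp
  ring

theorem posSemidef_mul_mul_transpose_of_forall [Fintype m] (B : Matrix m n ℝ)
    {M : Matrix n n ℝ} (hM : M.IsHermitian) (h : ∀ x, 0 ≤ (Bᵀ *ᵥ x) ⬝ᵥ (M *ᵥ (Bᵀ *ᵥ x))) :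
    (B * M * Bᵀ).PosSemidef := by
  rw [← conjTranspose_eq_transpose_of_trivial] at h ⊢
  refine .of_dotProduct_mulVec_nonneg (isHermitian_mul_mul_conjTranspose B hM) fun x => ?_
  rw [star_trivial, ← mulVec_mulVec, ← mulVec_mulVec, dotProduct_mulVec, ← mulVec_transpose,
    conjTranspose_eq_transpose_of_trivial]
  exact h x

theorem posSemidef_mul_mul_transpose_sub_smul_of_forall [Fintype m] [DecidableEq n] (B : Matrix m n ℝ)
    {M : Matrix n n ℝ} (hM : M.IsHermitian) (c : ℝ)
    (h : ∀ x, c * ((Bᵀ *ᵥ x) ⬝ᵥ (Bᵀ *ᵥ x)) ≤ (Bᵀ *ᵥ x) ⬝ᵥ (M *ᵥ (Bᵀ *ᵥ x))) :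
    (B * M * Bᵀ - c • (B * Bᵀ)).PosSemidef := by
  rw [show B * M * Bᵀ - c • (B * Bᵀ) = B * (M - c • 1) * Bᵀ by
    simp [Matrix.mul_sub, Matrix.sub_mul]]
  refine posSemidef_mul_mul_transpose_of_forall B
    (hM.sub (isHermitian_one.smul (IsSelfAdjoint.all c))) fun x => ?_
  rw [sub_mulVec, smul_mulVec, one_mulVec, dotProduct_sub, dotProduct_smul, smul_eq_mul,
    sub_nonneg]
  exact h x

theorem posSemidef_smul_mul_transpose_sub_of_forall [Fintype m] [DecidableEq n] (B : Matrix m n ℝ)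
    {M : Matrix n n ℝ} (hM : M.IsHermitian) (c : ℝ)
    (h : ∀ x, (Bᵀ *ᵥ x) ⬝ᵥ (M *ᵥ (Bᵀ *ᵥ x)) ≤ c * ((Bᵀ *ᵥ x) ⬝ᵥ (Bᵀ *ᵥ x))) :
    (c • (B * Bᵀ) - B * M * Bᵀ).PosSemidef := by
  rw [show c • (B * Bᵀ) - B * M * Bᵀ = B * (c • 1 - M) * Bᵀ by
    simp [Matrix.mul_sub, Matrix.sub_mul]]
  refine posSemidef_mul_mul_transpose_of_forall B
    ((isHermitian_one.smul (IsSelfAdjoint.all c)).sub hM) fun x => ?_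
  rw [sub_mulVec, smul_mulVec, one_mulVec, dotProduct_sub, dotProduct_smul, smul_eq_mul,
    sub_nonneg]
  exact h x

end Loewner

/-- λ_{K−1}(G)·ṼṼ' ⪯ VGV' ⪯ λ_1(G)·ṼṼ'. -/
theorem stmt_12 (d K : ℕ) (hK : 2 ≤ K)
    (V : Matrix (Fin d) (Fin K) ℝ)
    (vbar : Fin d → ℝ) (hvbar : ∀ i, vbar i = (1 / (K : ℝ)) * ∑ k, V i k)
    (Vt : Matrix (Fin d) (Fin K) ℝ) (hVt : ∀ i k, Vt i k = V i k - vbar i)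
    (G : Matrix (Fin K) (Fin K) ℝ) (hG : G.PosSemidef)
    (hG1 : G.mulVec (fun _ => (1 : ℝ)) = 0) :
    (V * G * Vᵀ - sval G (K - 1) • (Vt * Vtᵀ)).PosSemidef ∧
      (sval G 1 • (Vt * Vtᵀ) - V * G * Vᵀ).PosSemidef := by
  replace hG1 : G *ᵥ 1 = 0 := hG1
  have hVt1 : Vt *ᵥ 1 = 0 :=
    mulVec_one_eq_zero_of_sub_mean (by omega) fun i k => by rw [hVt, hvbar]
  have hsum (x : Fin d → ℝ) : ∑ k, (Vtᵀ *ᵥ x) k = 0 := by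
    rw [← dotProduct_one, mulVec_transpose, ← dotProduct_mulVec, hVt1, dotProduct_zero]
  have hVGV : V * G * Vᵀ = Vt * G * Vtᵀ := by
    have hV : V = Vt + vecMulVec vbar 1 := by ext i k; simp [hVt]
    have h1G : 1 ᵥ* G = 0 := by
      rw [← mulVec_transpose, ← conjTranspose_eq_transpose_of_trivial, hG.1, hG1]
    rw [hV, add_vecMulVec_mul_mul_transpose Vt vbar hG1 h1G]
  rw [hVGV]
  exact ⟨posSemidef_mul_mul_transpose_sub_smul_of_forall Vt hG.1 _ fun x =>
      sval_sub_one_mul_le_dotProduct_mulVec hK hG hG1 (hsum x),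
    posSemidef_smul_mul_transpose_sub_of_forall Vt hG.1 _ fun x =>
      dotProduct_mulVec_le_sval_one_mul G _⟩
end

section
/- For d ≥ 2 and x₀ ≥ d, one has 2·x₀^{d/2−1}·e^{−x₀/2} ≤ ∫_{x₀}^∞ x^{d/2−1} e^{−x/2} dx ≤ x₀·x₀^{d/2−1}·e^{−x₀/2}. -/
/-!
With `a = d/2 - 1 ≥ 0`, the lower bound comes from `x ^ a ≥ x₀ ^ a` on `(x₀, ∞)`. For the upper
bound, `log t ≤ t - 1` gives `(x / x₀) ^ a ≤ exp (a (x / x₀ - 1))`, which dominates the integrand by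
a pure exponential of rate `1/2 - a/x₀`; this rate is at least `1/x₀` exactly when `x₀ ≥ d`.
-/

open MeasureTheory Real Set

lemma rpow_le_exp_mul_sub_one {a t : ℝ} (ha : 0 ≤ a) (ht : 0 < t) :
    t ^ a ≤ exp (a * (t - 1)) := by
  rw [rpow_def_of_pos ht, exp_le_exp, mul_comm a]
  exact mul_le_mul_of_nonneg_right (log_le_sub_one_of_pos ht) ha

lemma rpow_mul_exp_neg_mul_le {a b x₀ x : ℝ} (ha : 0 ≤ a) (hx₀ : 0 < x₀) (hx : 0 < x) :
    x ^ a * exp (-b * x) ≤ x₀ ^ a * exp (-a) * exp (-(b - a / x₀) * x) := by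
  have hpow : x ^ a ≤ x₀ ^ a * exp (a * (x / x₀ - 1)) := by
    calc x ^ a = x₀ ^ a * (x / x₀) ^ a := by
          rw [← mul_rpow hx₀.le (div_pos hx hx₀).le, mul_div_cancel₀ x hx₀.ne']
      _ ≤ x₀ ^ a * exp (a * (x / x₀ - 1)) := by
          gcongr
          exact rpow_le_exp_mul_sub_one ha (div_pos hx hx₀)
  calc x ^ a * exp (-b * x) ≤ x₀ ^ a * exp (a * (x / x₀ - 1)) * exp (-b * x) := by gcongr
    _ = x₀ ^ a * exp (-a) * exp (-(b - a / x₀) * x) := by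
      rw [mul_assoc, mul_assoc, ← exp_add, ← exp_add]
      congr 2
      field_simp
      ring

lemma integrableOn_rpow_mul_exp_neg_mul_Ioi {a b x₀ : ℝ} (ha : -1 < a) (hb : 0 < b)
    (hx₀ : 0 ≤ x₀) : IntegrableOn (fun x ↦ x ^ a * exp (-b * x)) (Ioi x₀) := by
  have h := integrableOn_rpow_mul_exp_neg_mul_rpow ha one_pos hb
  simp only [rpow_one] at h
  exact h.mono_set (Ioi_subset_Ioi hx₀)

lemma integral_exp_neg_mul_Ioi {b : ℝ} (hb : 0 < b) (x₀ : ℝ) :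
    ∫ x in Ioi x₀, exp (-b * x) = exp (-b * x₀) / b := by
  rw [integral_exp_mul_Ioi (neg_neg_of_pos hb), neg_div_neg_eq]

theorem le_integral_rpow_mul_exp_neg_mul_Ioi {a b x₀ : ℝ} (ha : 0 ≤ a) (hb : 0 < b)
    (hx₀ : 0 ≤ x₀) : x₀ ^ a * exp (-b * x₀) / b ≤ ∫ x in Ioi x₀, x ^ a * exp (-b * x) := by
  calc x₀ ^ a * exp (-b * x₀) / b = ∫ x in Ioi x₀, x₀ ^ a * exp (-b * x) := by
        rw [integral_const_mul, integral_exp_neg_mul_Ioi hb, mul_div_assoc]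
    _ ≤ ∫ x in Ioi x₀, x ^ a * exp (-b * x) := by
        refine setIntegral_mono_on ((exp_neg_integrableOn_Ioi x₀ hb).const_mul _)
          (integrableOn_rpow_mul_exp_neg_mul_Ioi (by linarith) hb hx₀) measurableSet_Ioi
          fun x hx ↦ ?_
        gcongr
        exact hx.le

theorem integral_rpow_mul_exp_neg_mul_Ioi_le {a b x₀ : ℝ} (ha : 0 ≤ a) (hx₀ : 0 < x₀)
    (hab : a / x₀ < b) :
    ∫ x in Ioi x₀, x ^ a * exp (-b * x) ≤ x₀ ^ a * exp (-b * x₀) / (b - a / x₀) := by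
  have hc : 0 < b - a / x₀ := sub_pos.mpr hab
  have hb : 0 < b := (div_nonneg ha hx₀.le).trans_lt hab
  calc ∫ x in Ioi x₀, x ^ a * exp (-b * x)
      ≤ ∫ x in Ioi x₀, x₀ ^ a * exp (-a) * exp (-(b - a / x₀) * x) :=
        setIntegral_mono_on (integrableOn_rpow_mul_exp_neg_mul_Ioi (by linarith) hb hx₀.le)
          ((exp_neg_integrableOn_Ioi x₀ hc).const_mul _) measurableSet_Ioi
          fun x hx ↦ rpow_mul_exp_neg_mul_le ha hx₀ (hx₀.trans hx)
    _ = x₀ ^ a * exp (-b * x₀) / (b - a / x₀) := by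
        rw [integral_const_mul, integral_exp_neg_mul_Ioi hc, mul_div_assoc', mul_assoc,
          ← exp_add]
        congr 3
        field_simp
        ring

/-- two-sided bounds for the chi-square tail integral. -/
theorem stmt_16 (d : ℕ) (hd : 2 ≤ d) (x₀ : ℝ) (hx₀ : (d : ℝ) ≤ x₀) :
    2 * x₀ ^ ((d : ℝ) / 2 - 1) * Real.exp (-x₀ / 2) ≤
        (∫ x in Set.Ioi x₀, x ^ ((d : ℝ) / 2 - 1) * Real.exp (-x / 2)) ∧
      (∫ x in Set.Ioi x₀, x ^ ((d : ℝ) / 2 - 1) * Real.exp (-x / 2)) ≤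
        x₀ * x₀ ^ ((d : ℝ) / 2 - 1) * Real.exp (-x₀ / 2) := by
  set a : ℝ := (d : ℝ) / 2 - 1 with ha_def
  have hd2 : (2 : ℝ) ≤ d := by exact_mod_cast hd
  have ha : 0 ≤ a := by linarith
  have hx₀pos : 0 < x₀ := by linarith
  have hslack : 1 ≤ x₀ * (1 / 2 - a / x₀) := by
    rw [mul_sub, mul_div_cancel₀ a hx₀pos.ne']
    linarith
  have hrate : a / x₀ < 1 / 2 :=
    sub_pos.mp (pos_of_mul_pos_right (one_pos.trans_le hslack) hx₀pos.le)
  simp only [show ∀ x : ℝ, -x / 2 = -(1 / 2) * x from fun x ↦ by ring]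
  constructor
  · convert le_integral_rpow_mul_exp_neg_mul_Ioi ha one_half_pos hx₀pos.le using 1
    ring
  · refine (integral_rpow_mul_exp_neg_mul_Ioi_le ha hx₀pos hrate).trans ?_
    rw [div_le_iff₀ (sub_pos.mpr hrate)]
    calc x₀ ^ a * exp (-(1 / 2) * x₀) = x₀ ^ a * exp (-(1 / 2) * x₀) * 1 := (mul_one _).symm
      _ ≤ x₀ ^ a * exp (-(1 / 2) * x₀) * (x₀ * (1 / 2 - a / x₀)) := by gcongr
      _ = x₀ * x₀ ^ a * exp (-(1 / 2) * x₀) * (1 / 2 - a / x₀) := by ring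
end
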